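/- Let F : ℝ^{n} → ℝ^{n} be C¹ with F(0) = 0 and let E(e,t) denote the forward-complete flow of ė = F(e). Let Q be a symmetric positive definite matrix and let P be a symmetric positive definite matrix satisfying the Lyapunov equation (∂F/∂e)(0)ᵀ P + P (∂F/∂e)(0) = −Q. Define γ(e) := 2 (μ_max{P}/μ_min{P}) |(∂F/∂e)(e) − (∂F/∂e)(0)|. Then for all e, δ in ℝ^{n} and all t ≥ 0, |Φ(e,t) δ| ≤ √(μ_max{P}/μ_min{P}) · exp( (1/2) ∫₀ᵗ γ(E(e,s)) ds ) · exp( −(μ_min{Q}/(2 μ_max{P})) t ) · |δ|. -/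

import Mathlib

open Real Set Filter
open scoped RealInnerProductSpace Topology

/-- Euclidean state space ℝⁿ. -/
abbrev Euc (n : ℕ) := EuclideanSpace ℝ (Fin n)

/-- Smallest eigenvalue of a symmetric operator: the infimum of its quadratic form
on the unit sphere. -/
noncomputable def muMin {n : ℕ} (A : Euc n →L[ℝ] Euc n) : ℝ :=
  sInf {r : ℝ | ∃ v : Euc n, ‖v‖ = 1 ∧ r = ⟪A v, v⟫}

/-- Largest eigenvalue of a symmetric operator: the supremum of its quadratic form
on the unit sphere. -/
noncomputable def muMax {n : ℕ} (A : Euc n →L[ℝ] Euc n) : ℝ :=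
  sSup {r : ℝ | ∃ v : Euc n, ‖v‖ = 1 ∧ r = ⟪A v, v⟫}

/-! Along `x t = Φ e t δ` the quadratic form `V t = ⟪P x, x⟫` is a Lyapunov function up to
a time-dependent error. Writing `∂F/∂e(E(e,t)) = ∂F/∂e(0) + D t`, the Lyapunov equation makes
the `∂F/∂e(0)` part of `V'` equal to `-⟪Q x, x⟫ ≤ -(μ_min Q / μ_max P) V`, while the `D t` part is
at most `2 ‖P‖ ‖D t‖ |x|² ≤ γ V`, because `‖P‖ ≤ μ_max P` for symmetric `P ≥ 0` and
`μ_min P |x|² ≤ V`. Grönwall's inequality for `V' ≤ (γ - μ_min Q / μ_max P) V` bounds `V t`, and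
`μ_min P |x|² ≤ V t`, `V 0 ≤ μ_max P |δ|²` turn this into the bound on `|x t|`. -/

section QuadraticForm

variable {E : Type*} [NormedAddCommGroup E] [InnerProductSpace ℝ E]

theorem ContinuousLinearMap.opNorm_le_of_abs_inner_self_le {T : E →L[ℝ] E}
    (hT : (T : E →ₗ[ℝ] E).IsSymmetric) {M : ℝ} (hM : 0 ≤ M) (h : ∀ v, |⟪T v, v⟫| ≤ M * ‖v‖ ^ 2) :
    ‖T‖ ≤ M := by
  rw [T.norm_eq_iSup_rayleighQuotient hT]
  refine ciSup_le fun v => ?_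
  rcases eq_or_ne v 0 with rfl | hv
  · simpa using hM
  · rw [ContinuousLinearMap.rayleighQuotient, ContinuousLinearMap.reApplyInnerSelf_apply,
      abs_div, abs_sq, div_le_iff₀ (by positivity)]
    exact h v

theorem ContinuousLinearMap.abs_inner_apply_le (T : E →L[ℝ] E) (u w : E) :
    |⟪T u, w⟫| ≤ ‖T‖ * ‖u‖ * ‖w‖ :=
  (abs_real_inner_le_norm _ _).trans
    (mul_le_mul_of_nonneg_right (T.le_opNorm u) (norm_nonneg w))

variable [CompleteSpace E]

theorem inner_add_inner_eq_neg_of_lyapunov {A P Q : E →L[ℝ] E}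
    (hLyap : ContinuousLinearMap.adjoint A ∘L P + P ∘L A = -Q) (y : E) :
    ⟪P y, A y⟫ + ⟪P (A y), y⟫ = -⟪Q y, y⟫ := by
  have := congrArg (fun T : E →L[ℝ] E => ⟪T y, y⟫) hLyap
  simpa [inner_add_left, ContinuousLinearMap.adjoint_inner_left] using this

theorem inner_add_inner_le_of_lyapunov {A₀ A P Q : E →L[ℝ] E}
    (hLyap : ContinuousLinearMap.adjoint A₀ ∘L P + P ∘L A₀ = -Q) {m M q : ℝ}
    (hm : 0 < m) (hM : 0 < M) (hq : 0 ≤ q) (hPm : ∀ v, m * ‖v‖ ^ 2 ≤ ⟪P v, v⟫)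
    (hPM : ‖P‖ ≤ M) (hQq : ∀ v, q * ‖v‖ ^ 2 ≤ ⟪Q v, v⟫) (y : E) :
    ⟪P y, A y⟫ + ⟪P (A y), y⟫ ≤ (2 * (M / m) * ‖A - A₀‖ - q / M) * ⟪P y, y⟫ := by
  set D := A - A₀
  have hA : A y = A₀ y + D y := by simp [D]
  have hPy : ⟪P y, y⟫ ≤ M * ‖y‖ ^ 2 := by
    have := (le_abs_self _).trans (P.abs_inner_apply_le y y)
    nlinarith [norm_nonneg y]
  have hD : ⟪P y, D y⟫ + ⟪P (D y), y⟫ ≤ 2 * M * ‖D‖ * ‖y‖ ^ 2 := by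
    have h₁ := (le_abs_self _).trans (P.abs_inner_apply_le y (D y))
    have h₂ := (le_abs_self _).trans (P.abs_inner_apply_le (D y) y)
    have hDy := D.le_opNorm y
    have hPD : ‖P‖ * ‖D y‖ ≤ M * (‖D‖ * ‖y‖) :=
      mul_le_mul hPM hDy (norm_nonneg _) hM.le
    nlinarith [norm_nonneg y]
  have hQ : q / M * ⟪P y, y⟫ ≤ ⟪Q y, y⟫ :=
    calc q / M * ⟪P y, y⟫ ≤ q / M * (M * ‖y‖ ^ 2) := by gcongr
      _ = q * ‖y‖ ^ 2 := by field_simp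
      _ ≤ ⟪Q y, y⟫ := hQq y
  have hDm : 2 * M * ‖D‖ * ‖y‖ ^ 2 ≤ 2 * (M / m) * ‖D‖ * ⟪P y, y⟫ :=
    calc 2 * M * ‖D‖ * ‖y‖ ^ 2 = 2 * (M / m) * ‖D‖ * (m * ‖y‖ ^ 2) := by field_simp
      _ ≤ 2 * (M / m) * ‖D‖ * ⟪P y, y⟫ := by gcongr; exact hPm y
  have hL := inner_add_inner_eq_neg_of_lyapunov hLyap y
  rw [hA, map_add, inner_add_right, inner_add_left, sub_mul]
  linarith

end QuadraticForm

section Rayleigh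

variable {n : ℕ} (A : Euc n →L[ℝ] Euc n)

theorem exists_norm_eq_one_inner_apply_eq {v : Euc n} (hv : v ≠ 0) :
    ∃ u : Euc n, ‖u‖ = 1 ∧ ⟪A v, v⟫ = ‖v‖ ^ 2 * ⟪A u, u⟫ := by
  refine ⟨‖v‖⁻¹ • v, norm_smul_inv_norm hv, ?_⟩
  rw [map_smul, real_inner_smul_left, real_inner_smul_right]
  field_simp

theorem bddAbove_inner_apply_sphere :
    BddAbove {r : ℝ | ∃ v : Euc n, ‖v‖ = 1 ∧ r = ⟪A v, v⟫} := by
  refine ⟨‖A‖, ?_⟩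
  rintro r ⟨v, hv, rfl⟩
  simpa [hv] using (abs_le.mp (A.abs_inner_apply_le v v)).2

theorem bddBelow_inner_apply_sphere :
    BddBelow {r : ℝ | ∃ v : Euc n, ‖v‖ = 1 ∧ r = ⟪A v, v⟫} := by
  refine ⟨-‖A‖, ?_⟩
  rintro r ⟨v, hv, rfl⟩
  simpa [hv] using (abs_le.mp (A.abs_inner_apply_le v v)).1

theorem inner_apply_le_muMax (v : Euc n) : ⟪A v, v⟫ ≤ muMax A * ‖v‖ ^ 2 := by
  rcases eq_or_ne v 0 with rfl | hv
  · simp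
  obtain ⟨u, hu, huv⟩ := exists_norm_eq_one_inner_apply_eq A hv
  rw [huv, mul_comm]
  gcongr
  exact le_csSup (bddAbove_inner_apply_sphere A) ⟨u, hu, rfl⟩

theorem muMin_le_inner_apply (v : Euc n) : muMin A * ‖v‖ ^ 2 ≤ ⟪A v, v⟫ := by
  rcases eq_or_ne v 0 with rfl | hv
  · simp
  obtain ⟨u, hu, huv⟩ := exists_norm_eq_one_inner_apply_eq A hv
  rw [huv, mul_comm]
  gcongr
  exact csInf_le (bddBelow_inner_apply_sphere A) ⟨u, hu, rfl⟩

theorem opNorm_le_muMax (hA : IsSelfAdjoint A) (hA₀ : ∀ v, 0 ≤ ⟪A v, v⟫) : ‖A‖ ≤ muMax A :=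
  A.opNorm_le_of_abs_inner_self_le (A.isSelfAdjoint_iff_isSymmetric.mp hA)
    (Real.sSup_nonneg fun _ ⟨v, _, hr⟩ => hr ▸ hA₀ v) fun v => by
      rw [abs_of_nonneg (hA₀ v)]
      exact inner_apply_le_muMax A v

variable [Nontrivial (Euc n)]

theorem muMin_le_muMax : muMin A ≤ muMax A := by
  obtain ⟨u, hu⟩ := exists_norm_eq (Euc n) zero_le_one
  exact (csInf_le (bddBelow_inner_apply_sphere A) ⟨u, hu, rfl⟩).trans
    (le_csSup (bddAbove_inner_apply_sphere A) ⟨u, hu, rfl⟩)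

theorem muMin_pos (hA : ∀ v : Euc n, v ≠ 0 → 0 < ⟪A v, v⟫) : 0 < muMin A := by
  obtain ⟨u, hu, hmin⟩ := (isCompact_sphere (0 : Euc n) 1).exists_isMinOn
    (NormedSpace.sphere_nonempty.mpr zero_le_one)
    (by fun_prop : Continuous fun v : Euc n => ⟪A v, v⟫).continuousOn
  rw [mem_sphere_zero_iff_norm] at hu
  refine (hA u (norm_ne_zero_iff.mp (by simp [hu]))).trans_le
    (le_csInf ⟨_, u, hu, rfl⟩ ?_)
  rintro r ⟨v, hv, rfl⟩
  exact hmin (mem_sphere_zero_iff_norm.mpr hv)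

end Rayleigh

theorem HasDerivWithinAt.inner_clm_apply_self {E : Type*} [NormedAddCommGroup E]
    [InnerProductSpace ℝ E] (P : E →L[ℝ] E) {x : ℝ → E} {x' : E} {s : Set ℝ} {t : ℝ}
    (hx : HasDerivWithinAt x x' s t) :
    HasDerivWithinAt (fun r => ⟪P (x r), x r⟫) (⟪P (x t), x'⟫ + ⟪P x', x t⟫) s t :=
  (P.hasFDerivAt.comp_hasDerivWithinAt t hx).inner ℝ hx

theorem le_mul_exp_integral_sub_mul_of_hasDerivWithinAt {V V' g : ℝ → ℝ} {c : ℝ}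
    (hg : ContinuousOn g (Ici 0))
    (hV : ∀ t ∈ Ici (0 : ℝ), HasDerivWithinAt V (V' t) (Ici 0) t)
    (hV' : ∀ t ∈ Ioi (0 : ℝ), V' t ≤ (g t - c) * V t) {t : ℝ} (ht : 0 ≤ t) :
    V t ≤ V 0 * exp ((∫ s in (0 : ℝ)..t, g s) - c * t) := by
  -- `g (max s 0)` extends `g` continuously to `ℝ`, so that its primitive is differentiable
  set gExt : ℝ → ℝ := fun s => g (max s 0)
  have hgExt : Continuous gExt :=
    hg.comp_continuous (continuous_id.max continuous_const) fun s => le_max_right s 0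
  set G : ℝ → ℝ := fun t => ∫ s in (0 : ℝ)..t, gExt s
  have hexp : ∀ s, HasDerivAt (fun s => exp (c * s - G s))
      (exp (c * s - G s) * (c - gExt s)) s := fun s => by
    simpa using (((hasDerivAt_id s).const_mul c).sub
      (hgExt.integral_hasStrictDerivAt 0 s).hasDerivAt).exp
  have hVc : ContinuousOn V (Ici 0) := fun s hs => (hV s hs).continuousWithinAt
  have hW : AntitoneOn (fun s => V s * exp (c * s - G s)) (Ici 0) := by
    refine antitoneOn_of_hasDerivWithinAt_nonpos (convex_Ici 0)
      (hVc.mul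
        (continuous_iff_continuousAt.mpr fun s => (hexp s).continuousAt).continuousOn)
      (f' := fun s => V' s * exp (c * s - G s) + V s * (exp (c * s - G s) * (c - gExt s)))
      (fun s hs => ?_) (fun s hs => ?_) <;> rw [interior_Ici] at hs
    · exact (((hV s (Ioi_subset_Ici_self hs)).hasDerivAt (Ici_mem_nhds hs)).mul
        (hexp s)).hasDerivWithinAt
    · have hgs : gExt s = g s := by simp [gExt, max_eq_left (mem_Ioi.mp hs).le]
      have := hV' s hs
      rw [hgs]
      nlinarith [exp_pos (c * s - G s)]
  have hGt : G t = ∫ s in (0 : ℝ)..t, g s := by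
    refine intervalIntegral.integral_congr fun s hs => ?_
    rw [uIcc_of_le ht] at hs
    simp [gExt, max_eq_left hs.1]
  have hW₀ := hW self_mem_Ici ht ht
  simp only [G, intervalIntegral.integral_same, mul_zero, sub_zero, exp_zero, mul_one] at hW₀
  rw [← hGt]
  calc V t = V t * exp (c * t - G t) * exp (G t - c * t) := by
        rw [mul_assoc, ← exp_add]; simp
    _ ≤ V 0 * exp (G t - c * t) := by gcongr

theorem le_sqrt_mul_exp_mul_of_mul_sq_le {a b m M s : ℝ} (hm : 0 < m) (hb : 0 ≤ b)
    (h : m * a ^ 2 ≤ M * b ^ 2 * exp s) : a ≤ √(M / m) * exp (s / 2) * b := by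
  have ha : a ^ 2 ≤ M / m * b ^ 2 * exp s := by
    rw [mul_assoc, div_mul_eq_mul_div, le_div_iff₀' hm, ← mul_assoc]
    exact h
  calc a ≤ √(a ^ 2) := by rw [Real.sqrt_sq_eq_abs]; exact le_abs_self a
    _ ≤ √(M / m * b ^ 2 * exp s) := Real.sqrt_le_sqrt ha
    _ = √(M / m) * exp (s / 2) * b := by
      rw [Real.sqrt_mul' _ (exp_pos s).le, Real.sqrt_mul' _ (sq_nonneg b), Real.sqrt_sq hb,
        ← exp_half]
      ring

theorem gronwall_linearized_bound
    {n : ℕ}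
    (F : Euc n → Euc n) (hF : ContDiff ℝ 1 F)
    (Efl : Euc n → ℝ → Euc n)
    (hflow : ∀ e t, 0 ≤ t → HasDerivWithinAt (Efl e) (F (Efl e t)) (Ici 0) t)
    (Φ : Euc n → ℝ → Euc n →L[ℝ] Euc n)
    (hΦ0 : ∀ e, Φ e 0 = ContinuousLinearMap.id ℝ (Euc n))
    (hΦ : ∀ e t, 0 ≤ t →
      HasDerivWithinAt (Φ e) ((fderiv ℝ F (Efl e t)) ∘L Φ e t) (Ici 0) t)
    -- symmetric positive definite P and Q with the Lyapunov equation
    (Q P : Euc n →L[ℝ] Euc n)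
    (hQpos : ∀ v, v ≠ 0 → 0 < ⟪Q v, v⟫)
    (hPsa : IsSelfAdjoint P) (hPpos : ∀ v, v ≠ 0 → 0 < ⟪P v, v⟫)
    (hLyap : ContinuousLinearMap.adjoint (fderiv ℝ F 0) ∘L P + P ∘L fderiv ℝ F 0 = -Q) :
    ∀ (e δ : Euc n) (t : ℝ), 0 ≤ t →
      ‖Φ e t δ‖ ≤ Real.sqrt (muMax P / muMin P) *
        exp ((1/2) * ∫ s in (0:ℝ)..t,
          2 * (muMax P / muMin P) * ‖fderiv ℝ F (Efl e s) - fderiv ℝ F 0‖) *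
        exp (-(muMin Q / (2 * muMax P)) * t) * ‖δ‖ := by
  intro e δ t ht
  rcases eq_or_ne δ 0 with rfl | hδ
  · simp
  have : Nontrivial (Euc n) := ⟨δ, 0, hδ⟩
  have hmP := muMin_pos P hPpos
  have hMP := hmP.trans_le (muMin_le_muMax P)
  have hPnorm := opNorm_le_muMax P hPsa fun v =>
    (mul_nonneg hmP.le (sq_nonneg _)).trans (muMin_le_inner_apply P v)
  set A := fun s => fderiv ℝ F (Efl e s)
  set γ := fun s => 2 * (muMax P / muMin P) * ‖A s - fderiv ℝ F 0‖
  have hγ : ContinuousOn γ (Ici 0) :=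
    continuousOn_const.mul (((hF.continuous_fderiv one_ne_zero).comp_continuousOn
      fun s hs => (hflow e s hs).continuousWithinAt).sub continuousOn_const).norm
  have hx : ∀ s ∈ Ici (0 : ℝ), HasDerivWithinAt (fun s => Φ e s δ) (A s (Φ e s δ)) (Ici 0) s :=
    fun s hs => by simpa using (hΦ e s hs).clm_apply (hasDerivWithinAt_const s (Ici 0) δ)
  have hVt := le_mul_exp_integral_sub_mul_of_hasDerivWithinAt hγ
    (fun s hs => (hx s hs).inner_clm_apply_self P)
    (fun s _ => inner_add_inner_le_of_lyapunov hLyap hmP hMP (muMin_pos Q hQpos).le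
      (muMin_le_inner_apply P) hPnorm (muMin_le_inner_apply Q) _) ht
  have hsq : muMin P * ‖Φ e t δ‖ ^ 2 ≤
      muMax P * ‖δ‖ ^ 2 * exp ((∫ s in (0 : ℝ)..t, γ s) - muMin Q / muMax P * t) :=
    calc _ ≤ ⟪P (Φ e t δ), Φ e t δ⟫ := muMin_le_inner_apply P _
      _ ≤ ⟪P δ, δ⟫ * exp ((∫ s in (0 : ℝ)..t, γ s) - muMin Q / muMax P * t) := by
        simpa [hΦ0] using hVt
      _ ≤ _ := by gcongr; exact inner_apply_le_muMax P δ
  refine (le_sqrt_mul_exp_mul_of_mul_sq_le hmP (norm_nonneg δ) hsq).trans_eq ?_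
  rw [mul_assoc √(muMax P / muMin P) (exp _) (exp _), ← exp_add]
  congr 3
  field_simp
  ring
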